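/- arXiv:2010.05733 — 2 statements merged into one kernel-verified Lean document; each statement's English description precedes it below -/
import Mathlib

section
/- Let G be a graph and let (x,y) and (z,w) be two distinct ordered pairs of adjacent vertices of G with (x,y) ~mt (z,w). Then {x,y} ∩ {z,w} = ∅. -/
open SimpleGraph

/-- The closed neighborhood `N_G[v]` of a vertex `v`. -/
def closedNbhd {V : Type*} (G : SimpleGraph V) (v : V) : Set V :=
  insert v (G.neighborSet v)

/-- An ordered pair `(x, y)` is comparable if `N_G[x] ⊆ N_G[y]`. -/
def ComparablePair {V : Type*} (G : SimpleGraph V) (x y : V) : Prop :=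
  closedNbhd G x ⊆ closedNbhd G y

/-- `(x, y) ~mt (z, w)`: matched twins. -/
def MatchedTwins {V : Type*} (G : SimpleGraph V) (x y z w : V) : Prop :=
  closedNbhd G x \ {y} = closedNbhd G z \ {w} ∧
  closedNbhd G y \ {x} = closedNbhd G w \ {z}

/-- `(x, y) ~nt (z, w)`: nested twins. -/
def NestedTwins {V : Type*} (G : SimpleGraph V) (x y z w : V) : Prop :=
  G.neighborSet x \ {y} = G.neighborSet z \ {w} ∧
  closedNbhd G y \ {x} = closedNbhd G w \ {z}

/-- The square `H²` of a graph: two distinct vertices are adjacent iff they are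
at distance at most two in `H`. -/
def squareGraph {V : Type*} (H : SimpleGraph V) : SimpleGraph V where
  Adj u v := u ≠ v ∧ (H.Adj u v ∨ ∃ w, H.Adj u w ∧ H.Adj w v)
  symm := by
    refine ⟨?_⟩
    rintro u v ⟨hne, h⟩
    refine ⟨hne.symm, ?_⟩
    rcases h with h | ⟨w, h1, h2⟩
    · exact Or.inl h.symm
    · exact Or.inr ⟨w, h2.symm, h1.symm⟩
  loopless := by refine ⟨?_⟩; rintro u ⟨hne, _⟩; exact hne rfl

/-- `F` is (isomorphic to) a disjoint union `pK₁ + qK₂`: it has maximum degree at most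
one, `p` vertices of degree zero and `q` edges. -/
def IsDisjUnionK1K2 {W : Type*} (F : SimpleGraph W) (p q : ℕ) : Prop :=
  (∀ u v w : W, F.Adj u v → F.Adj u w → v = w) ∧
  {v : W | ∀ w, ¬ F.Adj v w}.ncard = p ∧
  F.edgeSet.ncard = q

/-- `ab` is an `S`-matching edge of type 1 in `H`. -/
def Type1Edge {V : Type*} (H : SimpleGraph V) (S : Set V) (a b : V) : Prop :=
  a ∉ S ∧ b ∉ S ∧ H.Adj a b ∧
  H.neighborSet a ∩ S = ∅ ∧ (H.neighborSet b ∩ S).Nonempty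

/-- `ab` is an `S`-matching edge of type 2 in `H`. -/
def Type2Edge {V : Type*} (H : SimpleGraph V) (S : Set V) (a b : V) : Prop :=
  a ∉ S ∧ b ∉ S ∧ H.Adj a b ∧
  (H.neighborSet a ∩ S).Nonempty ∧ (H.neighborSet b ∩ S).Nonempty ∧
  H.neighborSet a ∩ H.neighborSet b ∩ S = ∅

/-- `ab` is an `S`-matching edge of type 3 in `H`. -/
def Type3Edge {V : Type*} (H : SimpleGraph V) (S : Set V) (a b : V) : Prop :=
  a ∉ S ∧ b ∉ S ∧ H.Adj a b ∧
  (H.neighborSet a ∩ H.neighborSet b ∩ S).Nonempty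

namespace MatchedTwins

variable {V : Type*} {G : SimpleGraph V} {x y z w : V}

theorem swap (h : MatchedTwins G x y z w) : MatchedTwins G y x w z :=
  ⟨h.2, h.1⟩

theorem fst_ne_snd (h : MatchedTwins G x y z w) (hxy : x ≠ y) : x ≠ w :=
  (h.1 ▸ ⟨Set.mem_insert x _, hxy⟩ : x ∈ closedNbhd G z \ {w}).2

theorem snd_ne_fst (h : MatchedTwins G x y z w) (hxy : x ≠ y) : y ≠ z :=
  h.swap.fst_ne_snd hxy.symm

-- If `x = z` but `y ≠ w`, then `y ∈ N[z] \ {w} = N[x] \ {y}`.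
theorem snd_eq_of_fst_eq (h : MatchedTwins G x y z w) (hxy : G.Adj x y) (hxz : x = z) :
    y = w := by
  subst hxz
  by_contra hyw
  exact (h.1 ▸ ⟨Set.mem_insert_of_mem x hxy, hyw⟩ : y ∈ closedNbhd G x \ {y}).2 rfl

theorem fst_eq_of_snd_eq (h : MatchedTwins G x y z w) (hxy : G.Adj x y) (hyw : y = w) :
    x = z :=
  h.swap.snd_eq_of_fst_eq hxy.symm hyw

end MatchedTwins

theorem stmt0_general {V : Type*} (G : SimpleGraph V) (x y z w : V)
    (hxy : G.Adj x y) (hne : (x, y) ≠ (z, w))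
    (hmt : MatchedTwins G x y z w) :
    ({x, y} : Set V) ∩ {z, w} = ∅ := by
  have hxz : x ≠ z := fun h => hne (Prod.ext h (hmt.snd_eq_of_fst_eq hxy h))
  have hyw : y ≠ w := fun h => hne (Prod.ext (hmt.fst_eq_of_snd_eq hxy h) h)
  have hxw : x ≠ w := hmt.fst_ne_snd hxy.ne
  have hyz : y ≠ z := hmt.snd_ne_fst hxy.ne
  ext a
  simp only [Set.mem_inter_iff, Set.mem_insert_iff, Set.mem_singleton_iff,
    Set.mem_empty_iff_false, iff_false, not_and]
  rintro (rfl | rfl) (rfl | rfl) <;> contradiction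

theorem stmt0 {V : Type*} [Fintype V] (G : SimpleGraph V) (x y z w : V)
    (hxy : G.Adj x y) (hzw : G.Adj z w) (hne : (x, y) ≠ (z, w))
    (hmt : MatchedTwins G x y z w) :
    ({x, y} : Set V) ∩ {z, w} = ∅ :=
  stmt0_general G x y z w hxy hne hmt
end

section
/- Let H be a square root of a connected graph G with at least three vertices such that H − S is isomorphic to pK_1 + qK_2 for a set S ⊆ V(G). If a_1b_1 and a_2b_2 are two distinct S-matching edges of type 1 in H such that N_H(b_1) ∩ S = N_H(b_2) ∩ S ≠ ∅, then (a_1,b_1) ~nt (a_2,b_2) in G. -/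
open SimpleGraph

/-! Since `H - S` has maximum degree one, the only `H`-neighbour of `aᵢ` is `bᵢ` and the only
`H`-neighbour of `bᵢ` outside `S` is `aᵢ`. Hence in `H²` both `N(aᵢ) \ {bᵢ} = T` and
`N[bᵢ] \ {aᵢ} = T ∪ N_H(T)` are determined by `T = N_H(bᵢ) ∩ S`, which is the same for `i = 1, 2`. -/

section Type1Edge

variable {V : Type*} {H : SimpleGraph V} {S : Set V} {a b : V}

theorem IsDisjUnionK1K2.eq_of_adj_of_adj {p q : ℕ} (hHS : IsDisjUnionK1K2 (H.induce Sᶜ) p q)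
    ⦃u v w : V⦄ (hu : u ∉ S) (hv : v ∉ S) (hw : w ∉ S) (huv : H.Adj u v) (huw : H.Adj u w) :
    v = w :=
  congrArg Subtype.val (hHS.1 ⟨u, hu⟩ ⟨v, hv⟩ ⟨w, hw⟩ huv huw)

variable (hS : ∀ ⦃u v w⦄, u ∉ S → v ∉ S → w ∉ S → H.Adj u v → H.Adj u w → v = w)
  (h : Type1Edge H S a b)
include hS h

theorem Type1Edge.eq_of_adj_left {u : V} (hu : H.Adj a u) : u = b := by
  obtain ⟨haS, hbS, hab, haN, -⟩ := h
  by_cases huS : u ∈ S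
  · exact absurd ⟨hu, huS⟩ (Set.eq_empty_iff_forall_notMem.mp haN u)
  · exact hS haS huS hbS hu hab

theorem Type1Edge.eq_of_adj_right {u : V} (huS : u ∉ S) (hu : H.Adj b u) : u = a :=
  hS h.2.1 huS h.1 hu h.2.2.1.symm

theorem Type1Edge.neighborSet_squareGraph_diff :
    (squareGraph H).neighborSet a \ {b} = H.neighborSet b ∩ S := by
  ext u
  simp only [Set.mem_sdiff, Set.mem_inter_iff, Set.mem_singleton_iff, mem_neighborSet]
  constructor
  · rintro ⟨⟨hua, hau | ⟨w, haw, hwu⟩⟩, hub⟩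
    · exact absurd (h.eq_of_adj_left hS hau) hub
    · obtain rfl := h.eq_of_adj_left hS haw
      refine ⟨hwu, by_contra fun huS => hua ?_⟩
      exact (h.eq_of_adj_right hS huS hwu).symm
  · rintro ⟨hbu, huS⟩
    exact ⟨⟨fun hau => h.1 (hau ▸ huS), Or.inr ⟨b, h.2.2.1, hbu⟩⟩, fun hub => h.2.1 (hub ▸ huS)⟩

theorem Type1Edge.closedNbhd_squareGraph_diff :
    closedNbhd (squareGraph H) b \ {a} =
      H.neighborSet b ∩ S ∪ {u | ∃ w ∈ H.neighborSet b ∩ S, H.Adj w u} := by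
  ext u
  simp only [closedNbhd, Set.mem_sdiff, Set.mem_insert_iff, Set.mem_singleton_iff,
    Set.mem_union, Set.mem_inter_iff, Set.mem_ofPred_eq, mem_neighborSet]
  constructor
  · rintro ⟨rfl | ⟨hbu, hbu' | ⟨w, hbw, hwu⟩⟩, hua⟩
    · obtain ⟨w, hbw, hwS⟩ := h.2.2.2.2
      exact Or.inr ⟨w, ⟨hbw, hwS⟩, hbw.symm⟩
    · exact Or.inl ⟨hbu', by_contra fun huS => hua (h.eq_of_adj_right hS huS hbu')⟩
    · by_cases hwS : w ∈ S
      · exact Or.inr ⟨w, ⟨hbw, hwS⟩, hwu⟩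
      · obtain rfl := h.eq_of_adj_right hS hwS hbw
        exact absurd (h.eq_of_adj_left hS hwu).symm hbu
  · rintro (⟨hbu, huS⟩ | ⟨w, ⟨hbw, hwS⟩, hwu⟩)
    · exact ⟨Or.inr ⟨hbu.ne, Or.inl hbu⟩, fun hua => h.1 (hua ▸ huS)⟩
    · refine ⟨?_, ?_⟩
      · by_cases hub : u = b
        · exact Or.inl hub
        · exact Or.inr ⟨Ne.symm hub, Or.inr ⟨w, hbw, hwu⟩⟩
      · rintro rfl
        exact h.2.1 (h.eq_of_adj_left hS hwu.symm ▸ hwS)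

end Type1Edge

theorem stmt11_general {V : Type*} (G H : SimpleGraph V) (S : Set V) (p q : ℕ)
    (hsq : G = squareGraph H)
    (hHS : IsDisjUnionK1K2 (SimpleGraph.induce Sᶜ H) p q)
    (a₁ b₁ a₂ b₂ : V)
    (h₁ : Type1Edge H S a₁ b₁) (h₂ : Type1Edge H S a₂ b₂)
    (heq : H.neighborSet b₁ ∩ S = H.neighborSet b₂ ∩ S) :
    NestedTwins G a₁ b₁ a₂ b₂ := by
  subst hsq
  have hS := hHS.eq_of_adj_of_adj
  constructor
  · rw [h₁.neighborSet_squareGraph_diff hS, h₂.neighborSet_squareGraph_diff hS, heq]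
  · rw [h₁.closedNbhd_squareGraph_diff hS, h₂.closedNbhd_squareGraph_diff hS, heq]

theorem stmt11 {V : Type*} [Fintype V] (G H : SimpleGraph V) (S : Set V) (p q : ℕ)
    (hconn : G.Connected) (hcard : 3 ≤ Fintype.card V)
    (hsq : G = squareGraph H)
    (hHS : IsDisjUnionK1K2 (SimpleGraph.induce Sᶜ H) p q)
    (a₁ b₁ a₂ b₂ : V)
    (h₁ : Type1Edge H S a₁ b₁) (h₂ : Type1Edge H S a₂ b₂)
    (hne : s(a₁, b₁) ≠ s(a₂, b₂))
    (heq : H.neighborSet b₁ ∩ S = H.neighborSet b₂ ∩ S)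
    (hnonempty : (H.neighborSet b₁ ∩ S).Nonempty) :
    NestedTwins G a₁ b₁ a₂ b₂ :=
  stmt11_general G H S p q hsq hHS a₁ b₁ a₂ b₂ h₁ h₂ heq
end
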